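/- Let ξ ∈ ℚ_p be irrational with μ×(ξ) finite, and let ((x_k×, y_k×))_{k≥1} be a sequence of multiplicative best approximations to ξ, with Q_k× = |x_k× y_k×|^{1/2}. Then limsup_{k→∞} (log Q_{k+1}×)/(log Q_k×) ≤ (μ×(ξ) − 1)/(μ̂×(ξ) − 1). -/

import Mathlib

open Filter MeasureTheory
open scoped ENNReal

/-- A `p`-adic number is irrational if it is not the image of a rational number. -/
def PadicIrrational (p : ℕ) [Fact p.Prime] (ξ : ℚ_[p]) : Prop :=
  ∀ q : ℚ, (q : ℚ_[p]) ≠ ξ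

/-- The irrationality exponent `μ(ξ)` of a `p`-adic number `ξ`: the supremum (in `[0,∞]`)
of the real numbers `m` such that `0 < |yξ - x|_p ≤ max(|x|,|y|)^(-m)` has infinitely many
solutions in nonzero integers `x, y`. -/
noncomputable def muExp (p : ℕ) [Fact p.Prime] (ξ : ℚ_[p]) : ℝ≥0∞ :=
  sSup (ENNReal.ofReal '' {m : ℝ |
    {q : ℤ × ℤ | q.1 ≠ 0 ∧ q.2 ≠ 0 ∧
      0 < ‖(q.2 : ℚ_[p]) * ξ - (q.1 : ℚ_[p])‖ ∧
      ‖(q.2 : ℚ_[p]) * ξ - (q.1 : ℚ_[p])‖ ≤ (max |(q.1 : ℝ)| |(q.2 : ℝ)|) ^ (-m)}.Infinite})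

/-- The multiplicative irrationality exponent `μ×(ξ)`: the supremum of the real numbers `m`
such that `0 < |yξ - x|_p ≤ (|xy|^(1/2))^(-m)` has infinitely many solutions in nonzero
integers `x, y`. -/
noncomputable def muTimesExp (p : ℕ) [Fact p.Prime] (ξ : ℚ_[p]) : ℝ≥0∞ :=
  sSup (ENNReal.ofReal '' {m : ℝ |
    {q : ℤ × ℤ | q.1 ≠ 0 ∧ q.2 ≠ 0 ∧
      0 < ‖(q.2 : ℚ_[p]) * ξ - (q.1 : ℚ_[p])‖ ∧
      ‖(q.2 : ℚ_[p]) * ξ - (q.1 : ℚ_[p])‖ ≤ (Real.sqrt |(q.1 : ℝ) * (q.2 : ℝ)|) ^ (-m)}.Infinite})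

/-- The uniform irrationality exponent `μ̂(ξ)`: the supremum of the real numbers `m` such that
for every sufficiently large real `X` the system
`0 < max(|x|,|y|) ≤ X`, `|yξ - x|_p ≤ X^(-m)` has an integer solution. -/
noncomputable def muHatExp (p : ℕ) [Fact p.Prime] (ξ : ℚ_[p]) : ℝ≥0∞ :=
  sSup (ENNReal.ofReal '' {m : ℝ | ∀ᶠ X : ℝ in atTop, ∃ x y : ℤ,
    0 < max |(x : ℝ)| |(y : ℝ)| ∧ max |(x : ℝ)| |(y : ℝ)| ≤ X ∧
    ‖(y : ℚ_[p]) * ξ - (x : ℚ_[p])‖ ≤ X ^ (-m)})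

/-- The uniform multiplicative irrationality exponent `μ̂×(ξ)`: the supremum of the real
numbers `m` such that for every sufficiently large real `X` the system
`0 < |xy|^(1/2) ≤ X`, `|yξ - x|_p ≤ X^(-m)` has an integer solution. -/
noncomputable def muHatTimesExp (p : ℕ) [Fact p.Prime] (ξ : ℚ_[p]) : ℝ≥0∞ :=
  sSup (ENNReal.ofReal '' {m : ℝ | ∀ᶠ X : ℝ in atTop, ∃ x y : ℤ,
    0 < Real.sqrt |(x : ℝ) * (y : ℝ)| ∧ Real.sqrt |(x : ℝ) * (y : ℝ)| ≤ X ∧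
    ‖(y : ℚ_[p]) * ξ - (x : ℚ_[p])‖ ≤ X ^ (-m)})

/-! The uniform exponent gives, for every large `X < Q (k + 1)` and every `m < μ̂×(ξ)`, a
coprime pair `(a, b)` with `s = |ab|^(1/2) ≤ X` and `s |bξ - a|_p ≤ X^(1 - m)`: dividing a
solution by the gcd `d` of its coordinates costs at most a factor `|d|`, since `|d|_p ≥ 1/|d|`.
For the first index `j` with `s < Q (j + 1)` we have `Q j ≤ s`, so the best approximation
property gives `Q j |y_j ξ - x_j|_p ≤ X^(1 - m)`, while for `w > μ×(ξ)` eventually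
`|y_j ξ - x_j|_p > Q j ^ (-w)`. Hence `X^(m - 1) < Q j ^ (w - 1) ≤ Q k ^ (w - 1)`, and letting
`X → Q (k + 1)` yields `(m - 1) log Q (k + 1) ≤ (w - 1) log Q k`. The denominator is positive:
approximating `p^k ξ ∈ ℤ_p` by integers shows `μ̂×(ξ) ≥ 3/2`. -/

open scoped Topology

section Padic

variable {p : ℕ} [Fact p.Prime]

lemma inv_abs_le_norm_intCast {d : ℤ} (hd : d ≠ 0) : |(d : ℝ)|⁻¹ ≤ ‖(d : ℚ_[p])‖ := by
  rw [Padic.norm_eq_zpow_neg_valuation (by exact_mod_cast hd), Padic.valuation_intCast,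
    zpow_neg, zpow_natCast]
  have hdvd : (p : ℤ) ^ padicValInt p d ≤ |d| :=
    Int.le_of_dvd (abs_pos.2 hd) ((dvd_abs _ _).2 (padicValInt_dvd d))
  gcongr
  · exact_mod_cast pow_pos (Fact.out : p.Prime).pos _
  · exact_mod_cast hdvd

lemma one_le_sqrt_abs_mul {a b : ℤ} (ha : a ≠ 0) (hb : b ≠ 0) :
    1 ≤ Real.sqrt |(a : ℝ) * (b : ℝ)| := by
  rw [Real.one_le_sqrt, ← Int.cast_mul, ← Int.cast_abs]
  exact_mod_cast Int.one_le_abs (mul_ne_zero ha hb)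

lemma PadicIrrational.norm_sub_pos {ξ : ℚ_[p]} (hξ : PadicIrrational p ξ) (a : ℤ) {b : ℤ}
    (hb : b ≠ 0) : 0 < ‖(b : ℚ_[p]) * ξ - (a : ℚ_[p])‖ := by
  refine norm_pos_iff.2 (sub_ne_zero.2 fun h => hξ (a / b) ?_)
  have hb' : (b : ℚ_[p]) ≠ 0 := by exact_mod_cast hb
  push_cast
  rw [div_eq_iff hb', ← h, mul_comm]

lemma PadicInt.exists_natCast_lt_norm_sub_le (ζ : ℤ_[p]) (n : ℕ) :
    ∃ x : ℕ, x < p ^ n ∧ ‖(ζ : ℚ_[p]) - x‖ ≤ (p : ℝ) ^ (-n : ℤ) := by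
  refine ⟨ζ.appr n, ζ.appr_lt n, ?_⟩
  have := (PadicInt.norm_le_pow_iff_mem_span_pow _ n).2 (PadicInt.appr_spec n ζ)
  exact_mod_cast this

lemma Padic.exists_norm_pow_mul_le_one (ξ : ℚ_[p]) : ∃ k : ℕ, ‖(p : ℚ_[p]) ^ k * ξ‖ ≤ 1 := by
  have h : Tendsto (fun k : ℕ => ‖(p : ℚ_[p]) ^ k * ξ‖) atTop (𝓝 0) := by
    simp only [norm_mul, norm_pow, Padic.norm_p]
    simpa using (tendsto_pow_atTop_nhds_zero_of_lt_one (by positivity)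
      (inv_lt_one_of_one_lt₀ (by exact_mod_cast (Fact.out : p.Prime).one_lt))).mul_const ‖ξ‖
  exact (h.eventually (ge_mem_nhds one_pos)).exists

lemma PadicInt.exists_natCast_le_norm_sub_le (ζ : ℤ_[p]) {X : ℝ} (hX : 1 ≤ X) :
    ∃ x : ℕ, (x : ℝ) ≤ X ∧ ‖(ζ : ℚ_[p]) - x‖ ≤ p / X := by
  have hp : 1 < p := (Fact.out : p.Prime).one_lt
  set N := ⌊X⌋₊
  set n := Nat.log p N
  have hN : N ≠ 0 := (Nat.floor_pos.2 hX).ne'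
  have hpn : (p : ℝ) ^ n ≤ X :=
    le_trans (by exact_mod_cast Nat.pow_log_le_self p hN) (Nat.floor_le (by linarith))
  have hXpn : X < (p : ℝ) ^ (n + 1) :=
    (Nat.lt_floor_add_one X).trans_le (by exact_mod_cast Nat.lt_pow_succ_log_self hp N)
  obtain ⟨x, hxn, hx⟩ := PadicInt.exists_natCast_lt_norm_sub_le ζ n
  refine ⟨x, le_trans (by exact_mod_cast hxn.le) hpn, hx.trans ?_⟩
  rw [zpow_neg, zpow_natCast, le_div_iff₀ (by linarith), ← div_eq_inv_mul,
    div_le_iff₀ (by positivity), ← pow_succ']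
  exact hXpn.le

lemma PadicIrrational.eventually_exists_approx {ξ : ℚ_[p]} (hξ : PadicIrrational p ξ) :
    ∀ᶠ X : ℝ in atTop, ∃ x y : ℤ,
      0 < Real.sqrt |(x : ℝ) * (y : ℝ)| ∧ Real.sqrt |(x : ℝ) * (y : ℝ)| ≤ X ∧
      ‖(y : ℚ_[p]) * ξ - (x : ℚ_[p])‖ ≤ X ^ (-(3 / 2 : ℝ)) := by
  obtain ⟨k, hk⟩ := Padic.exists_norm_pow_mul_le_one ξ
  set y : ℕ := p ^ k
  have hy : (0 : ℝ) < y := by exact_mod_cast pow_pos (Fact.out : p.Prime).pos k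
  set ζ : ℤ_[p] := ⟨(y : ℚ_[p]) * ξ, by simpa [y] using hk⟩
  have hζ : 0 < ‖(ζ : ℚ_[p])‖ := by
    show 0 < ‖(y : ℚ_[p]) * ξ‖
    simpa using hξ.norm_sub_pos 0 (b := y) (by exact_mod_cast hy.ne')
  filter_upwards [eventually_ge_atTop (max (y : ℝ) 1),
    (tendsto_rpow_atTop (by norm_num : (0 : ℝ) < 1 / 2)).eventually_ge_atTop (p * y),
    (tendsto_rpow_neg_atTop (by norm_num : (0 : ℝ) < 3 / 2)).eventually (gt_mem_nhds hζ)]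
    with X hXy hXp hXζ
  have hX1 : 1 ≤ X := le_of_max_le_right hXy
  have hX0 : 0 < X := by linarith
  have hheight : 1 ≤ X ^ 2 / y := by
    rw [le_div_iff₀ hy]; nlinarith [le_of_max_le_left hXy]
  obtain ⟨x, hxX, hx⟩ := ζ.exists_natCast_le_norm_sub_le hheight
  have herr : (p : ℝ) / (X ^ 2 / y) ≤ X ^ (-(3 / 2 : ℝ)) := by
    calc (p : ℝ) / (X ^ 2 / y) = p * y / X ^ 2 := by field_simp
      _ ≤ X ^ (1 / 2 : ℝ) / X ^ (2 : ℝ) := by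
        rw [Real.rpow_two]; gcongr
      _ = X ^ (-(3 / 2 : ℝ)) := by rw [← Real.rpow_sub hX0]; norm_num
  have hx0 : x ≠ 0 := by
    rintro rfl
    simp only [Nat.cast_zero, sub_zero] at hx
    linarith
  refine ⟨x, y, ?_, ?_, ?_⟩
  · positivity
  · rw [Real.sqrt_le_left hX0.le]
    push_cast
    rw [abs_of_nonneg (by positivity)]
    exact (le_div_iff₀ hy).1 hxX
  · simpa using hx.trans herr

lemma one_lt_muHatTimesExp {ξ : ℚ_[p]} (hξ : PadicIrrational p ξ) :
    1 < muHatTimesExp p ξ :=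
  calc (1 : ℝ≥0∞) < ENNReal.ofReal (3 / 2) := by norm_num
    _ ≤ muHatTimesExp p ξ := le_sSup ⟨3 / 2, hξ.eventually_exists_approx, rfl⟩

lemma eventually_exists_of_lt_muHatTimesExp {ξ : ℚ_[p]} {m : ℝ}
    (hm : ENNReal.ofReal m < muHatTimesExp p ξ) :
    ∀ᶠ X : ℝ in atTop, ∃ x y : ℤ,
      0 < Real.sqrt |(x : ℝ) * (y : ℝ)| ∧ Real.sqrt |(x : ℝ) * (y : ℝ)| ≤ X ∧
      ‖(y : ℚ_[p]) * ξ - (x : ℚ_[p])‖ ≤ X ^ (-m) := by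
  obtain ⟨_, ⟨m', hm', rfl⟩, hmm'⟩ := lt_sSup_iff.1 hm
  have hmm' : m ≤ m' := (ENNReal.ofReal_lt_ofReal_iff'.1 hmm').1.le
  filter_upwards [hm', eventually_ge_atTop 1] with X ⟨x, y, hpos, hle, hnorm⟩ hX
  exact ⟨x, y, hpos, hle, hnorm.trans (Real.rpow_le_rpow_of_exponent_le hX (by linarith))⟩

lemma finite_of_muTimesExp_lt {ξ : ℚ_[p]} {w : ℝ} (hw : muTimesExp p ξ < ENNReal.ofReal w) :
    {q : ℤ × ℤ | q.1 ≠ 0 ∧ q.2 ≠ 0 ∧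
      0 < ‖(q.2 : ℚ_[p]) * ξ - (q.1 : ℚ_[p])‖ ∧
      ‖(q.2 : ℚ_[p]) * ξ - (q.1 : ℚ_[p])‖ ≤ (Real.sqrt |(q.1 : ℝ) * (q.2 : ℝ)|) ^ (-w)}.Finite :=
  Set.not_infinite.1 fun hinf => hw.not_ge (le_sSup ⟨w, hinf, rfl⟩)

lemma muHatTimesExp_le_muTimesExp {ξ : ℚ_[p]} (hξ : PadicIrrational p ξ) :
    muHatTimesExp p ξ ≤ muTimesExp p ξ := by
  refine sSup_le ?_
  rintro _ ⟨m, hm, rfl⟩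
  rcases le_or_gt m 0 with hm0 | hm0
  · simp [ENNReal.ofReal_eq_zero.2 hm0]
  refine le_sSup ⟨m, fun hfin => ?_, rfl⟩
  set S := {q : ℤ × ℤ | q.1 ≠ 0 ∧ q.2 ≠ 0 ∧
      0 < ‖(q.2 : ℚ_[p]) * ξ - (q.1 : ℚ_[p])‖ ∧
      ‖(q.2 : ℚ_[p]) * ξ - (q.1 : ℚ_[p])‖ ≤ (Real.sqrt |(q.1 : ℝ) * (q.2 : ℝ)|) ^ (-m)}
  have hsol : ∀ᶠ X : ℝ in atTop, ∃ q ∈ S, ‖(q.2 : ℚ_[p]) * ξ - (q.1 : ℚ_[p])‖ ≤ X ^ (-m) := by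
    filter_upwards [hm] with X ⟨x, y, hpos, hle, hnorm⟩
    have hxy : x ≠ 0 ∧ y ≠ 0 := by simpa [not_or] using hpos.ne'
    exact ⟨(x, y), ⟨hxy.1, hxy.2, hξ.norm_sub_pos x hxy.2,
      hnorm.trans (Real.rpow_le_rpow_of_nonpos hpos hle (by linarith))⟩, hnorm⟩
  obtain ⟨-, q₀, hq₀, -⟩ := hsol.exists
  obtain ⟨q, hqS, hqmin⟩ := S.exists_min_image
    (fun q => ‖(q.2 : ℚ_[p]) * ξ - (q.1 : ℚ_[p])‖) hfin ⟨q₀, hq₀⟩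
  obtain ⟨X, ⟨q', hq'S, hq'⟩, hX⟩ := (hsol.and ((tendsto_rpow_neg_atTop hm0).eventually
    (gt_mem_nhds hqS.2.2.1))).exists
  exact (hqmin q' hq'S).not_gt (hq'.trans_lt hX)

lemma eventually_sqrt_rpow_neg_lt_norm {ξ : ℚ_[p]} (hξ : PadicIrrational p ξ) {w : ℝ}
    (hw : muTimesExp p ξ < ENNReal.ofReal w) {x y : ℕ → ℤ}
    (hinj : Function.Injective fun k => (x k, y k)) (hne : ∀ k, x k ≠ 0 ∧ y k ≠ 0) :
    ∀ᶠ k in atTop, Real.sqrt |(x k : ℝ) * (y k : ℝ)| ^ (-w)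
      < ‖(y k : ℚ_[p]) * ξ - (x k : ℚ_[p])‖ := by
  rw [← Nat.cofinite_eq_atTop]
  filter_upwards [hinj.tendsto_cofinite.eventually
    (finite_of_muTimesExp_lt hw).eventually_cofinite_notMem] with k hk
  exact not_le.1 fun hle => hk ⟨(hne k).1, (hne k).2, hξ.norm_sub_pos _ (hne k).2, hle⟩

lemma exists_isCoprime_sqrt_mul_norm_le (ξ : ℚ_[p]) {x y : ℤ} (hx : x ≠ 0) (hy : y ≠ 0) :
    ∃ a b : ℤ, IsCoprime a b ∧ a ≠ 0 ∧ b ≠ 0 ∧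
      Real.sqrt |(a : ℝ) * (b : ℝ)| ≤ Real.sqrt |(x : ℝ) * (y : ℝ)| ∧
      Real.sqrt |(a : ℝ) * (b : ℝ)| * ‖(b : ℚ_[p]) * ξ - (a : ℚ_[p])‖
        ≤ Real.sqrt |(x : ℝ) * (y : ℝ)| * ‖(y : ℚ_[p]) * ξ - (x : ℚ_[p])‖ := by
  obtain ⟨d, a, b, hd, hab, rfl, rfl⟩ := Int.exists_gcd_one' (Int.gcd_pos_of_ne_zero_left y hx)
  have ha : a ≠ 0 := left_ne_zero_of_mul hx
  have hb : b ≠ 0 := left_ne_zero_of_mul hy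
  have hd' : (d : ℝ) ≠ 0 := by exact_mod_cast hd.ne'
  have hsqrt : Real.sqrt |(↑(a * d) : ℝ) * ↑(b * d)| = |(d : ℝ)| * Real.sqrt |(a : ℝ) * b| := by
    push_cast
    rw [show (a : ℝ) * d * (b * d) = d ^ 2 * (a * b) by ring, abs_mul,
      Real.sqrt_mul (by positivity), abs_pow, Real.sqrt_sq (abs_nonneg _)]
  have hnorm : ‖(↑(b * d) : ℚ_[p]) * ξ - ↑(a * d)‖ = ‖(d : ℚ_[p])‖ * ‖(b : ℚ_[p]) * ξ - a‖ := by
    rw [← norm_mul]; push_cast; ring_nf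
  refine ⟨a, b, Int.isCoprime_iff_gcd_eq_one.2 hab, ha, hb, ?_, ?_⟩
  · rw [hsqrt]
    exact le_mul_of_one_le_left (Real.sqrt_nonneg _) (by simpa using Nat.one_le_of_lt hd)
  · rw [hsqrt, hnorm, mul_mul_mul_comm]
    refine le_mul_of_one_le_left (by positivity) ?_
    rw [← inv_le_iff_one_le_mul₀' (abs_pos.2 hd')]
    exact inv_abs_le_norm_intCast (by exact_mod_cast hd.ne')

lemma eventually_exists_isCoprime_of_lt_muHatTimesExp {ξ : ℚ_[p]} {m : ℝ}
    (hm : ENNReal.ofReal m < muHatTimesExp p ξ) :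
    ∀ᶠ X : ℝ in atTop, ∃ a b : ℤ, IsCoprime a b ∧ a ≠ 0 ∧ b ≠ 0 ∧
      Real.sqrt |(a : ℝ) * (b : ℝ)| ≤ X ∧
      Real.sqrt |(a : ℝ) * (b : ℝ)| * ‖(b : ℚ_[p]) * ξ - (a : ℚ_[p])‖ ≤ X ^ (1 - m) := by
  filter_upwards [eventually_exists_of_lt_muHatTimesExp hm, eventually_gt_atTop 0]
    with X ⟨x, y, hpos, hle, hnorm⟩ hX
  have hxy : x ≠ 0 ∧ y ≠ 0 := by simpa [not_or] using hpos.ne'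
  obtain ⟨a, b, hab, ha, hb, hs, hsnorm⟩ := exists_isCoprime_sqrt_mul_norm_le ξ hxy.1 hxy.2
  refine ⟨a, b, hab, ha, hb, hs.trans hle, hsnorm.trans ?_⟩
  calc Real.sqrt |(x : ℝ) * y| * ‖(y : ℚ_[p]) * ξ - x‖ ≤ X * X ^ (-m) := by gcongr
    _ = X ^ (1 - m) := by rw [sub_eq_add_neg, Real.rpow_add hX, Real.rpow_one]

end Padic

section BestApproximation

variable {Q L : ℕ → ℝ} {m w : ℝ}

lemma mul_log_le_of_best_approx (hQ : Monotone Q) (hQ1 : ∀ k, 1 ≤ Q k) (hL : Antitone L)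
    (hL0 : ∀ k, 0 < L k) (hw : 1 ≤ w) {J k : ℕ} (hJ : ∀ j ≥ J, Q j ^ (-w) < L j) {X s : ℝ}
    (hXJ : X ^ (1 - m) < L J) (hs1 : 1 ≤ s) (hsX : s ≤ X) (hXk : X < Q (k + 1))
    (hs : ∀ j, s < Q (j + 1) → s * L j ≤ X ^ (1 - m)) :
    (m - 1) * Real.log X ≤ (w - 1) * Real.log (Q k) := by
  have hex : ∃ j, s < Q (j + 1) := ⟨k, hsX.trans_lt hXk⟩
  set j := Nat.find hex
  have hjk : j ≤ k := Nat.find_min' hex (hsX.trans_lt hXk)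
  have hsLj : s * L j ≤ X ^ (1 - m) := hs j (Nat.find_spec hex)
  have hJj : J < j := hL.reflect_lt ((le_mul_of_one_le_left (hL0 j).le hs1).trans_lt
    (hsLj.trans_lt hXJ))
  obtain ⟨i, hij⟩ : ∃ i, j = i + 1 := Nat.exists_eq_succ_of_ne_zero (by omega)
  have hQjs : Q j ≤ s := by
    rw [hij]
    exact not_lt.1 (Nat.find_min hex (show i < j by omega))
  have hQj0 : 0 < Q j := zero_lt_one.trans_le (hQ1 j)
  have hkey : Q j * Q j ^ (-w) < X ^ (1 - m) :=
    calc Q j * Q j ^ (-w) < Q j * L j := by gcongr; exact hJ j hJj.le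
      _ ≤ s * L j := by gcongr; exact (hL0 j).le
      _ ≤ X ^ (1 - m) := hsLj
  have hX0 : 0 < X := by linarith
  have hlog := Real.log_lt_log (by positivity) hkey
  rw [Real.log_mul hQj0.ne' (by positivity), Real.log_rpow hQj0, Real.log_rpow hX0] at hlog
  have hjk' : (w - 1) * Real.log (Q j) ≤ (w - 1) * Real.log (Q k) :=
    mul_le_mul_of_nonneg_left (Real.log_le_log hQj0 (hQ hjk)) (by linarith)
  linarith

lemma eventually_mul_log_succ_le (hQ : Monotone Q) (hQ1 : ∀ k, 1 ≤ Q k)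
    (htend : Tendsto Q atTop atTop) (hL : Antitone L) (hL0 : ∀ k, 0 < L k) (hm : 1 < m)
    (hw : 1 ≤ w) (hlow : ∀ᶠ k in atTop, Q k ^ (-w) < L k)
    (hunif : ∀ᶠ X in atTop, ∃ s, 1 ≤ s ∧ s ≤ X ∧ ∀ j, s < Q (j + 1) → s * L j ≤ X ^ (1 - m)) :
    ∀ᶠ k in atTop, (m - 1) * Real.log (Q (k + 1)) ≤ (w - 1) * Real.log (Q k) := by
  obtain ⟨J, hJ⟩ := eventually_atTop.1 hlow
  have hdecay : Tendsto (fun X : ℝ => X ^ (1 - m)) atTop (𝓝 0) := by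
    simpa only [neg_sub] using tendsto_rpow_neg_atTop (by linarith : 0 < m - 1)
  obtain ⟨X₀, hX₀⟩ := eventually_atTop.1 (hunif.and (hdecay.eventually (gt_mem_nhds (hL0 J))))
  filter_upwards [(htend.comp (tendsto_add_atTop_nat 1)).eventually_gt_atTop X₀] with k hk
  have hlim : Tendsto (fun X => (m - 1) * Real.log X) (𝓝[<] Q (k + 1))
      (𝓝 ((m - 1) * Real.log (Q (k + 1)))) :=
    (((Real.continuousAt_log (by linarith [hQ1 (k + 1)])).tendsto).const_mul _).mono_left
      nhdsWithin_le_nhds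
  refine le_of_tendsto hlim ?_
  filter_upwards [Ioo_mem_nhdsLT hk] with X ⟨hX₀X, hXk⟩
  obtain ⟨⟨s, hs1, hsX, hs⟩, hXJ⟩ := hX₀ X hX₀X.le
  exact mul_log_le_of_best_approx hQ hQ1 hL hL0 hw hJ hXJ hs1 hsX hXk hs

lemma limsup_ofReal_log_div_le (htend : Tendsto Q atTop atTop) {a b : ℝ} (hb : 0 < b)
    (h : ∀ᶠ k in atTop, b * Real.log (Q (k + 1)) ≤ a * Real.log (Q k)) :
    atTop.limsup (fun k => ENNReal.ofReal (Real.log (Q (k + 1)) / Real.log (Q k)))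
      ≤ ENNReal.ofReal (a / b) := by
  refine limsup_le_of_le (by isBoundedDefault) ?_
  filter_upwards [h, htend.eventually_gt_atTop 1] with k hk hQk
  refine ENNReal.ofReal_le_ofReal ?_
  rw [div_le_div_iff₀ (Real.log_pos hQk) hb]
  linarith

end BestApproximation

lemma le_ofReal_sub_one_div_sub_one {a : ℝ≥0∞} {μ ν : ℝ} (hν : 1 < ν)
    (h : ∀ w m : ℝ, μ < w → 1 < m → m < ν → a ≤ ENNReal.ofReal ((w - 1) / (m - 1))) :
    a ≤ ENNReal.ofReal ((μ - 1) / (ν - 1)) := by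
  have hcont : Tendsto (fun q : ℝ × ℝ => ENNReal.ofReal ((q.1 - 1) / (q.2 - 1))) (𝓝 (μ, ν))
      (𝓝 (ENNReal.ofReal ((μ - 1) / (ν - 1)))) :=
    (ENNReal.continuous_ofReal.tendsto _).comp
      (((continuous_fst.sub continuous_const).tendsto _).div
        ((continuous_snd.sub continuous_const).tendsto _) (sub_ne_zero.2 hν.ne'))
  refine ge_of_tendsto (hcont.mono_left ((Filter.prod_mono nhdsWithin_le_nhds
    nhdsWithin_le_nhds).trans_eq nhds_prod_eq.symm : 𝓝[>] μ ×ˢ 𝓝[<] ν ≤ _)) ?_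
  filter_upwards [Eventually.prod_mk (self_mem_nhdsWithin : ∀ᶠ w in 𝓝[>] μ, μ < w)
    (Ioo_mem_nhdsLT hν)] with q ⟨hw, hm1, hm⟩
  exact h q.1 q.2 hw hm1 hm

lemma le_sub_one_div_sub_one_of_forall {a μ ν : ℝ≥0∞} (hμ : μ ≠ ⊤) (hν : 1 < ν) (hνμ : ν ≤ μ)
    (h : ∀ w m : ℝ, μ < ENNReal.ofReal w → 1 < m → ENNReal.ofReal m < ν →
      a ≤ ENNReal.ofReal ((w - 1) / (m - 1))) :
    a ≤ (μ - 1) / (ν - 1) := by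
  have hνtop : ν ≠ ⊤ := ne_top_of_le_ne_top hμ hνμ
  have hν' : 1 < ν.toReal := by
    rw [← ENNReal.ofReal_toReal hνtop] at hν
    exact ENNReal.one_lt_ofReal.1 hν
  rw [← ENNReal.ofReal_toReal hμ, ← ENNReal.ofReal_toReal hνtop, ← ENNReal.ofReal_one,
    ← ENNReal.ofReal_sub _ zero_le_one, ← ENNReal.ofReal_sub _ zero_le_one,
    ← ENNReal.ofReal_div_of_pos (by linarith)]
  exact le_ofReal_sub_one_div_sub_one hν' fun w m hw hm1 hm =>
    h w m ((ENNReal.lt_ofReal_iff_toReal_lt hμ).2 hw) hm1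
      ((ENNReal.ofReal_lt_iff_lt_toReal (by linarith) hνtop).2 hm)

theorem statement18_general (p : ℕ) [Fact p.Prime] (ξ : ℚ_[p]) (hξ : PadicIrrational p ξ)
    (hfin : muTimesExp p ξ ≠ ⊤)
    (x y : ℕ → ℤ) (Q : ℕ → ℝ)
    (hQ : ∀ k, Q k = Real.sqrt |(x k : ℝ) * (y k : ℝ)|)
    (hne : ∀ k, x k ≠ 0 ∧ y k ≠ 0)
    (hmono : StrictMono Q)
    (htend : Tendsto Q atTop atTop)
    (hdec : StrictAnti fun k => ‖(y k : ℚ_[p]) * ξ - (x k : ℚ_[p])‖)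
    (hbest : ∀ k, ∀ a b : ℤ, IsCoprime a b → a ≠ 0 → b ≠ 0 →
      Real.sqrt |(a : ℝ) * (b : ℝ)| < Q (k + 1) →
      ‖(y k : ℚ_[p]) * ξ - (x k : ℚ_[p])‖ ≤ ‖(b : ℚ_[p]) * ξ - (a : ℚ_[p])‖) :
    atTop.limsup (fun k => ENNReal.ofReal (Real.log (Q (k + 1)) / Real.log (Q k)))
      ≤ (muTimesExp p ξ - 1) / (muHatTimesExp p ξ - 1) := by
  have hν := one_lt_muHatTimesExp hξ
  have hνμ := muHatTimesExp_le_muTimesExp hξ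
  have hQ1 : ∀ k, 1 ≤ Q k := fun k => hQ k ▸ one_le_sqrt_abs_mul (hne k).1 (hne k).2
  have hinj : Function.Injective fun k => (x k, y k) := fun i j hij => by
    obtain ⟨hx, hy⟩ := Prod.mk.inj hij
    exact hdec.injective (by rw [hx, hy])
  refine le_sub_one_div_sub_one_of_forall hfin hν hνμ fun w m hw hm1 hm => ?_
  refine limsup_ofReal_log_div_le htend (by linarith) (eventually_mul_log_succ_le
    hmono.monotone hQ1 htend hdec.antitone (fun k => hξ.norm_sub_pos _ (hne k).2) hm1
    (ENNReal.one_lt_ofReal.1 ((hν.trans_le hνμ).trans hw)).le ?_ ?_)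
  · simpa only [hQ] using eventually_sqrt_rpow_neg_lt_norm hξ hw hinj hne
  · filter_upwards [eventually_exists_isCoprime_of_lt_muHatTimesExp hm]
      with X ⟨a, b, hab, ha, hb, hsX, hs⟩
    exact ⟨_, one_le_sqrt_abs_mul ha hb, hsX, fun j hj =>
      le_trans (by gcongr; exact hbest j a b hab ha hb hj) hs⟩

/-- For a sequence of multiplicative best approximations `(x_k, y_k)` to an irrational `ξ`
with `μ×(ξ)` finite, one has
`limsup (log Q_{k+1})/(log Q_k) ≤ (μ×(ξ) - 1)/(μ̂×(ξ) - 1)`, where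
`Q_k = |x_k y_k|^(1/2)`. -/
theorem statement18 (p : ℕ) [Fact p.Prime] (ξ : ℚ_[p]) (hξ : PadicIrrational p ξ)
    (hfin : muTimesExp p ξ ≠ ⊤)
    (x y : ℕ → ℤ) (Q : ℕ → ℝ)
    (hQ : ∀ k, Q k = Real.sqrt |(x k : ℝ) * (y k : ℝ)|)
    (hcop : ∀ k, IsCoprime (x k) (y k))
    (hne : ∀ k, x k ≠ 0 ∧ y k ≠ 0)
    (hmono : StrictMono Q)
    (htend : Tendsto Q atTop atTop)
    (hdec : StrictAnti fun k => ‖(y k : ℚ_[p]) * ξ - (x k : ℚ_[p])‖)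
    (hbest : ∀ k, ∀ a b : ℤ, IsCoprime a b → a ≠ 0 → b ≠ 0 →
      Real.sqrt |(a : ℝ) * (b : ℝ)| < Q (k + 1) →
      ‖(y k : ℚ_[p]) * ξ - (x k : ℚ_[p])‖ ≤ ‖(b : ℚ_[p]) * ξ - (a : ℚ_[p])‖) :
    atTop.limsup (fun k => ENNReal.ofReal (Real.log (Q (k + 1)) / Real.log (Q k)))
      ≤ (muTimesExp p ξ - 1) / (muHatTimesExp p ξ - 1) :=
  statement18_general p ξ hξ hfin x y Q hQ hne hmono htend hdec hbest
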